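/- Let λ > 0, c > 0 and define F(u,t) = ∑_{k=0}^∞ (λ/(2c))^{2k} (c²t² − u²)^k / (k!)². Then for all (u,t) with t > 0 and |u| < ct, F satisfies the Klein–Gordon-type equation ∂²F/∂t² − c² ∂²F/∂u² = λ² F; equivalently ∂²F/∂t² = c² ∂²F/∂u² + λ² F. -/

import Mathlib

/-!
Write `F lam c u t = G (c²t² - u²)` with `G x = ∑ bᵏ xᵏ / (k!)²` and `b = (λ / 2c)²`. The
coefficient recurrence `(k + 1)² aₖ₊₁ = b aₖ` makes `G` solve the Bessel-type equation
`x G'' + G' = b G`, while the chain rule gives `∂ₜ²F - c² ∂ᵤ²F = 4c² (x G'' x + G' x)` at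
`x = c²t² - u²`. Hence the wave operator sends `F` to `4c² b F = λ² F`.
-/

/-- `F(u,t) = ∑_{k=0}^∞ (λ/(2c))^{2k} (c²t² − u²)^k / (k!)²`,
which equals `I₀((λ/c)√(c²t² − u²))` for `|u| ≤ ct`. -/
noncomputable def F (lam c u t : ℝ) : ℝ :=
  ∑' k : ℕ, (lam / (2 * c)) ^ (2 * k) * (c ^ 2 * t ^ 2 - u ^ 2) ^ k /
    ((Nat.factorial k : ℝ)) ^ 2

def derivCoeff (a : ℕ → ℝ) (k : ℕ) : ℝ := (k + 1) * a (k + 1)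

noncomputable def powerSeriesSum (a : ℕ → ℝ) (x : ℝ) : ℝ := ∑' k, a k * x ^ k

section EntireSeries

variable {a : ℕ → ℝ}

theorem summable_derivCoeff_mul_pow (ha : ∀ r, Summable fun k => a k * r ^ k) (r : ℝ) :
    Summable fun k => derivCoeff a k * r ^ k := by
  set R := |r| + 1
  have hR : Summable fun k => |a (k + 1) * (2 * R) ^ (k + 1)| :=
    summable_abs_iff.2 ((summable_nat_add_iff 1).2 (ha (2 * R)))
  refine Summable.of_norm_bounded hR fun k => ?_
  have hk : (k + 1 : ℝ) ≤ 2 ^ (k + 1) := by exact_mod_cast (Nat.lt_two_pow_self).le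
  have hr : |r| ^ k ≤ R ^ (k + 1) :=
    (pow_le_pow_left₀ (abs_nonneg r) (le_add_of_nonneg_right zero_le_one) k).trans
      (pow_le_pow_right₀ (le_add_of_nonneg_left (abs_nonneg r)) k.le_succ)
  calc ‖derivCoeff a k * r ^ k‖ = |a (k + 1)| * ((k + 1 : ℝ) * |r| ^ k) := by
        rw [derivCoeff, Real.norm_eq_abs, abs_mul, abs_mul, abs_pow]
        rw [abs_of_nonneg (by positivity : (0 : ℝ) ≤ k + 1)]
        ring
    _ ≤ |a (k + 1)| * (2 ^ (k + 1) * R ^ (k + 1)) := by gcongr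
    _ = |a (k + 1) * (2 * R) ^ (k + 1)| := by
        rw [abs_mul, abs_of_nonneg (by positivity : (0 : ℝ) ≤ (2 * R) ^ (k + 1)), mul_pow]

theorem hasDerivAt_powerSeriesSum (ha : ∀ r, Summable fun k => a k * r ^ k) (x : ℝ) :
    HasDerivAt (powerSeriesSum a) (powerSeriesSum (derivCoeff a) x) x := by
  set R := |x| + 1
  have hx : x ∈ Metric.ball (0 : ℝ) R := by simp [R]
  set u : ℕ → ℝ := fun n => n * |a n| * R ^ (n - 1)
  have hu : Summable u := by
    refine (summable_nat_add_iff 1).1 <|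
      (summable_abs_iff.2 (summable_derivCoeff_mul_pow ha R)).congr fun k => ?_
    have hR : 0 ≤ R := by positivity
    simp only [u, derivCoeff, abs_mul, abs_pow, abs_of_nonneg hR, Nat.add_sub_cancel]
    rw [abs_of_nonneg (by positivity : (0 : ℝ) ≤ k + 1)]
    push_cast
    ring
  have hbound : ∀ n y, y ∈ Metric.ball (0 : ℝ) R → ‖a n * (n * y ^ (n - 1))‖ ≤ u n := by
    intro n y hy
    have hyR : |y| ≤ R := by
      rw [Metric.mem_ball, Real.dist_eq, sub_zero] at hy
      exact hy.le
    rw [Real.norm_eq_abs, abs_mul, abs_mul, abs_pow, Nat.abs_cast]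
    calc |a n| * (n * |y| ^ (n - 1)) ≤ |a n| * (n * R ^ (n - 1)) := by gcongr
      _ = u n := by ring
  have hD := hasDerivAt_tsum_of_isPreconnected hu Metric.isOpen_ball
    (convex_ball (0 : ℝ) R).isPreconnected (fun n y _ => (hasDerivAt_pow n y).const_mul (a n))
    hbound hx (ha x) hx
  have hshift : ∑' n : ℕ, a n * (n * x ^ (n - 1)) = powerSeriesSum (derivCoeff a) x := by
    rw [tsum_eq_zero_add' ?_, powerSeriesSum]
    · simp only [derivCoeff, CharP.cast_eq_zero, zero_mul, mul_zero, zero_add, Nat.add_sub_cancel]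
      push_cast
      exact tsum_congr fun k => by ring
    · exact (summable_derivCoeff_mul_pow ha x).congr fun k => by
        simp only [derivCoeff, Nat.add_sub_cancel]; push_cast; ring
  rwa [hshift] at hD

theorem powerSeriesSum_ode {b : ℝ} (ha : ∀ r, Summable fun k => a k * r ^ k)
    (hrec : ∀ k : ℕ, (k + 1 : ℝ) ^ 2 * a (k + 1) = b * a k) (x : ℝ) :
    x * powerSeriesSum (derivCoeff (derivCoeff a)) x + powerSeriesSum (derivCoeff a) x =
      b * powerSeriesSum a x := by
  have ha' := summable_derivCoeff_mul_pow ha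
  have ha'' := summable_derivCoeff_mul_pow ha' x
  have hshift : ∑' n : ℕ, n * derivCoeff a n * x ^ n =
      x * powerSeriesSum (derivCoeff (derivCoeff a)) x := by
    rw [tsum_eq_zero_add' ?_, powerSeriesSum, ← tsum_mul_left]
    · simp only [CharP.cast_eq_zero, zero_mul, zero_add, derivCoeff]
      push_cast
      exact tsum_congr fun k => by ring
    · exact (ha''.mul_left x).congr fun k => by simp only [derivCoeff]; push_cast; ring
  have hterm : ∀ n : ℕ,
      n * derivCoeff a n * x ^ n + derivCoeff a n * x ^ n = b * (a n * x ^ n) := by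
    intro n
    rw [← mul_assoc, ← hrec n, derivCoeff]
    ring
  rw [← hshift, powerSeriesSum, powerSeriesSum, ← tsum_mul_left, ← Summable.tsum_add ?_ (ha' x)]
  · exact tsum_congr hterm
  · exact (((ha x).mul_left b).sub (ha' x)).congr fun n => by linear_combination -hterm n

end EntireSeries

noncomputable def besselCoeff (b : ℝ) (k : ℕ) : ℝ := b ^ k / (k.factorial : ℝ) ^ 2

theorem summable_besselCoeff_mul_pow (b r : ℝ) : Summable fun k => besselCoeff b k * r ^ k := by
  refine Summable.of_norm_bounded (Real.summable_pow_div_factorial |b * r|) fun k => ?_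
  have hk : (1 : ℝ) ≤ k.factorial := by exact_mod_cast k.factorial_pos
  calc ‖besselCoeff b k * r ^ k‖ = |b * r| ^ k / (k.factorial : ℝ) ^ 2 := by
        rw [besselCoeff, Real.norm_eq_abs, abs_mul, abs_div, abs_pow, abs_pow, abs_pow,
          Nat.abs_cast, abs_mul, mul_pow]
        ring
    _ ≤ |b * r| ^ k / k.factorial := by
        gcongr
        exact le_self_pow₀ hk two_ne_zero

theorem besselCoeff_succ (b : ℝ) (k : ℕ) :
    (k + 1 : ℝ) ^ 2 * besselCoeff b (k + 1) = b * besselCoeff b k := by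
  have hk : (k.factorial : ℝ) ≠ 0 := by exact_mod_cast k.factorial_ne_zero
  simp only [besselCoeff, Nat.factorial_succ]
  push_cast
  field_simp
  ring

theorem iteratedDeriv_two_comp {𝕜 : Type*} [NontriviallyNormedField 𝕜]
    {f f' f'' g g' g'' : 𝕜 → 𝕜} (hf : ∀ y, HasDerivAt f (f' y) y)
    (hf' : ∀ y, HasDerivAt f' (f'' y) y) (hg : ∀ x, HasDerivAt g (g' x) x)
    (hg' : ∀ x, HasDerivAt g' (g'' x) x) (x : 𝕜) :
    iteratedDeriv 2 (fun x => f (g x)) x = f'' (g x) * g' x ^ 2 + f' (g x) * g'' x := by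
  have hderiv : deriv (fun x => f (g x)) = fun x => f' (g x) * g' x :=
    funext fun x => ((hf (g x)).comp x (hg x)).deriv
  rw [iteratedDeriv_succ, iteratedDeriv_one, hderiv]
  exact (((hf' (g x)).comp x (hg x)).mul (hg' x)).deriv.trans (by simp only [Function.comp]; ring)

theorem iteratedDeriv_two_comp_interval {G G' G'' : ℝ → ℝ} (hG : ∀ y, HasDerivAt G (G' y) y)
    (hG' : ∀ y, HasDerivAt G' (G'' y) y) (c u t : ℝ) :
    iteratedDeriv 2 (fun s => G (c ^ 2 * s ^ 2 - u ^ 2)) t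
        - c ^ 2 * iteratedDeriv 2 (fun v => G (c ^ 2 * t ^ 2 - v ^ 2)) u =
      4 * c ^ 2 * ((c ^ 2 * t ^ 2 - u ^ 2) * G'' (c ^ 2 * t ^ 2 - u ^ 2)
        + G' (c ^ 2 * t ^ 2 - u ^ 2)) := by
  have hs : ∀ s, HasDerivAt (fun s => c ^ 2 * s ^ 2 - u ^ 2) (2 * c ^ 2 * s) s := fun s => by
    simpa [mul_comm, mul_left_comm] using
      ((hasDerivAt_pow 2 s).const_mul (c ^ 2)).sub_const (u ^ 2)
  have hs' : ∀ s, HasDerivAt (fun s => 2 * c ^ 2 * s) (2 * c ^ 2) s := fun s => by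
    simpa using (hasDerivAt_id s).const_mul (2 * c ^ 2)
  have hv : ∀ v, HasDerivAt (fun v => c ^ 2 * t ^ 2 - v ^ 2) (-2 * v) v := fun v => by
    simpa using (hasDerivAt_pow 2 v).const_sub (c ^ 2 * t ^ 2)
  have hv' : ∀ v : ℝ, HasDerivAt (fun v => -2 * v) (-2) v := fun v => by
    simpa using (hasDerivAt_id v).const_mul (-2 : ℝ)
  rw [iteratedDeriv_two_comp hG hG' hs hs', iteratedDeriv_two_comp hG hG' hv hv']
  ring

theorem F_eq_powerSeriesSum (lam c u t : ℝ) :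
    F lam c u t = powerSeriesSum (besselCoeff ((lam / (2 * c)) ^ 2)) (c ^ 2 * t ^ 2 - u ^ 2) :=
  tsum_congr fun k => by rw [besselCoeff, ← pow_mul]; ring

theorem F_satisfies_klein_gordon_general
    (lam c : ℝ) (hc : 0 < c) :
    ∀ u t : ℝ, 0 < t → |u| < c * t →
      iteratedDeriv 2 (fun s => F lam c u s) t =
        c ^ 2 * iteratedDeriv 2 (fun v => F lam c v t) u + lam ^ 2 * F lam c u t := by
  intro u t _ _
  set b := (lam / (2 * c)) ^ 2
  have ha := summable_besselCoeff_mul_pow b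
  have hwave := iteratedDeriv_two_comp_interval (hasDerivAt_powerSeriesSum ha)
    (hasDerivAt_powerSeriesSum (summable_derivCoeff_mul_pow ha)) c u t
  rw [powerSeriesSum_ode ha (besselCoeff_succ b)] at hwave
  have hb : 4 * c ^ 2 * b = lam ^ 2 := by
    simp only [b]
    field_simp
    ring
  simp only [F_eq_powerSeriesSum]
  linear_combination hwave + powerSeriesSum (besselCoeff b) (c ^ 2 * t ^ 2 - u ^ 2) * hb

theorem F_satisfies_klein_gordon
    (lam c : ℝ) (hlam : 0 < lam) (hc : 0 < c) :
    ∀ u t : ℝ, 0 < t → |u| < c * t →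
      iteratedDeriv 2 (fun s => F lam c u s) t =
        c ^ 2 * iteratedDeriv 2 (fun v => F lam c v t) u + lam ^ 2 * F lam c u t :=
  F_satisfies_klein_gordon_general lam c hc
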